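/- The subgroup of the symmetric group on {1,…,7} generated by the twelve double transpositions (1 2)(6 7), (1 6)(2 7), (4 5)(6 7), (4 7)(5 6), (1 2)(4 5), (1 4)(2 5), (3 4)(2 7), (2 3)(4 7), (1 6)(3 4), (1 4)(3 6), (2 3)(5 6), (2 5)(3 6) acts transitively on {1,…,7}; that is, for any a, b ∈ {1,…,7} there is a product of these permutations carrying a to b. -/
import Mathlib


/-- The twelve double transpositions of `Fin 7` (0-indexed: point `i` of `{1,…,7}`
corresponds to `i - 1 : Fin 7`) arising as monodromy transformations `T_{ij,k}`. -/
def monodromyPerms : Set (Equiv.Perm (Fin 7)) :=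
  { Equiv.swap 0 1 * Equiv.swap 5 6,  -- (1 2)(6 7)
    Equiv.swap 0 5 * Equiv.swap 1 6,  -- (1 6)(2 7)
    Equiv.swap 3 4 * Equiv.swap 5 6,  -- (4 5)(6 7)
    Equiv.swap 3 6 * Equiv.swap 4 5,  -- (4 7)(5 6)
    Equiv.swap 0 1 * Equiv.swap 3 4,  -- (1 2)(4 5)
    Equiv.swap 0 3 * Equiv.swap 1 4,  -- (1 4)(2 5)
    Equiv.swap 2 3 * Equiv.swap 1 6,  -- (3 4)(2 7)
    Equiv.swap 1 2 * Equiv.swap 3 6,  -- (2 3)(4 7)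
    Equiv.swap 0 5 * Equiv.swap 2 3,  -- (1 6)(3 4)
    Equiv.swap 0 3 * Equiv.swap 2 5,  -- (1 4)(3 6)
    Equiv.swap 1 2 * Equiv.swap 4 5,  -- (2 3)(5 6)
    Equiv.swap 1 4 * Equiv.swap 2 5 } -- (2 5)(3 6)

/-- For each `i : Fin 7`, an element of the monodromy group sending `0` to `i`. -/
def monConn : Fin 7 → Equiv.Perm (Fin 7)
  | 0 => 1
  | 1 => Equiv.swap 0 1 * Equiv.swap 5 6
  | 2 => (Equiv.swap 1 2 * Equiv.swap 3 6) * (Equiv.swap 0 1 * Equiv.swap 5 6)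
  | 3 => Equiv.swap 0 3 * Equiv.swap 1 4
  | 4 => (Equiv.swap 1 4 * Equiv.swap 2 5) * (Equiv.swap 0 1 * Equiv.swap 5 6)
  | 5 => Equiv.swap 0 5 * Equiv.swap 1 6
  | 6 => (Equiv.swap 3 4 * Equiv.swap 5 6) * (Equiv.swap 0 5 * Equiv.swap 1 6)

lemma monConn_mem (i : Fin 7) : monConn i ∈ Subgroup.closure monodromyPerms := by
  have h : ∀ g ∈ monodromyPerms, g ∈ Subgroup.closure monodromyPerms :=
    fun g hg => Subgroup.subset_closure hg
  have m1 : (Equiv.swap 0 1 * Equiv.swap 5 6 : Equiv.Perm (Fin 7)) ∈ monodromyPerms :=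
    Set.mem_insert _ _
  have m2 : (Equiv.swap 0 5 * Equiv.swap 1 6 : Equiv.Perm (Fin 7)) ∈ monodromyPerms :=
    Set.mem_insert_of_mem _ (Set.mem_insert _ _)
  have m3 : (Equiv.swap 3 4 * Equiv.swap 5 6 : Equiv.Perm (Fin 7)) ∈ monodromyPerms :=
    Set.mem_insert_of_mem _ (Set.mem_insert_of_mem _ (Set.mem_insert _ _))
  have m6 : (Equiv.swap 0 3 * Equiv.swap 1 4 : Equiv.Perm (Fin 7)) ∈ monodromyPerms :=
    Set.mem_insert_of_mem _ (Set.mem_insert_of_mem _ (Set.mem_insert_of_mem _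
      (Set.mem_insert_of_mem _ (Set.mem_insert_of_mem _ (Set.mem_insert _ _)))))
  have m8 : (Equiv.swap 1 2 * Equiv.swap 3 6 : Equiv.Perm (Fin 7)) ∈ monodromyPerms :=
    Set.mem_insert_of_mem _ (Set.mem_insert_of_mem _ (Set.mem_insert_of_mem _
      (Set.mem_insert_of_mem _ (Set.mem_insert_of_mem _ (Set.mem_insert_of_mem _
        (Set.mem_insert_of_mem _ (Set.mem_insert _ _)))))))
  have m12 : (Equiv.swap 1 4 * Equiv.swap 2 5 : Equiv.Perm (Fin 7)) ∈ monodromyPerms :=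
    Set.mem_insert_of_mem _ (Set.mem_insert_of_mem _ (Set.mem_insert_of_mem _
      (Set.mem_insert_of_mem _ (Set.mem_insert_of_mem _ (Set.mem_insert_of_mem _
        (Set.mem_insert_of_mem _ (Set.mem_insert_of_mem _ (Set.mem_insert_of_mem _
          (Set.mem_insert_of_mem _ (Set.mem_insert_of_mem _ rfl))))))))))
  fin_cases i
  · exact Subgroup.one_mem _
  · exact h _ m1
  · exact Subgroup.mul_mem _ (h _ m8) (h _ m1)
  · exact h _ m6
  · exact Subgroup.mul_mem _ (h _ m12) (h _ m1)
  · exact h _ m2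
  · exact Subgroup.mul_mem _ (h _ m3) (h _ m2)

lemma monConn_zero (i : Fin 7) : monConn i 0 = i := by
  fin_cases i <;> decide

/-- The subgroup generated by the twelve monodromy double transpositions acts
transitively on `{1,…,7}` (realised as `Fin 7`). -/
theorem monodromy_transitive :
    ∀ a b : Fin 7, ∃ g ∈ Subgroup.closure monodromyPerms, g a = b := by
  intro a b
  refine ⟨monConn b * (monConn a)⁻¹,
    Subgroup.mul_mem _ (monConn_mem b) (Subgroup.inv_mem _ (monConn_mem a)), ?_⟩
  have ha : (monConn a)⁻¹ a = 0 := by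
    rw [Equiv.Perm.inv_def, Equiv.symm_apply_eq, monConn_zero]
  simp only [Equiv.Perm.mul_apply, ha, monConn_zero]
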